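/- arXiv:2507.23666 — 3 statements merged into one kernel-verified Lean document; each statement's English description precedes it below -/
import Mathlib

section
/- Let γ be an admissible sequence from x to y, where x, y ∈ X. Then d_X(x, y) ≤ K²·ℓ(γ) + K·C. -/
/-- `f` is a pseudo-isometry with constants `K`, `C`. -/
def IsPseudoIsometry {S T : Type*} [MetricSpace S] [MetricSpace T] (f : S → T) (K C : ℝ) : Prop :=
  (∀ x₀ x₁ : S, (1 / K) * dist x₀ x₁ - C ≤ dist (f x₀) (f x₁) ∧
      dist (f x₀) (f x₁) ≤ K * dist x₀ x₁) ∧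
  ∀ y : T, ∃ x : S, dist (f x) y ≤ C

/-- An admissible sequence from `x` to `y`: data `(x₀,y₁),(u₁,v₁),(x₁,y₂),…,(u_k,v_k),(x_k,y_{k+1})`
with `x₀ = x`, `y_{k+1} = y`, `xᵢ, yᵢ ∈ S` for `1 ≤ i ≤ k`, and `uᵢ = f(yᵢ)`, `vᵢ = f(xᵢ)`
(so the `T`-points are determined and not stored). We record `xᵢ` as `xs i` and `yᵢ` as `ys i`. -/
structure AdmSeq {X T : Type*} [MetricSpace X] [MetricSpace T] (S : Set X) (f : S → T)
    (x y : X) where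
  k : ℕ
  xs : ℕ → X
  ys : ℕ → X
  hx0 : xs 0 = x
  hyend : ys (k + 1) = y
  hxS : ∀ i, 1 ≤ i → i ≤ k → xs i ∈ S
  hyS : ∀ i, 1 ≤ i → i ≤ k → ys i ∈ S

/-- The length of an admissible sequence:
`ℓ(γ) = d_X(x₀,y₁) + Σ_{i=1}^k (d_T(uᵢ,vᵢ) + d_X(xᵢ,y_{i+1}))`. -/
noncomputable def AdmSeq.length {X T : Type*} [MetricSpace X] [MetricSpace T] {S : Set X}
    {f : S → T} {x y : X} (γ : AdmSeq S f x y) : ℝ :=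
  dist (γ.xs 0) (γ.ys 1) +
    ∑ i : Fin γ.k,
      (dist (f ⟨γ.ys (i.val + 1), γ.hyS _ (Nat.succ_le_succ (Nat.zero_le _)) i.isLt⟩)
          (f ⟨γ.xs (i.val + 1), γ.hxS _ (Nat.succ_le_succ (Nat.zero_le _)) i.isLt⟩) +
        dist (γ.xs (i.val + 1)) (γ.ys (i.val + 2)))

/-- If f is a pseudo-isometry with constants K, C, then any admissible sequence γ from x to y
satisfies d_X(x,y) ≤ K²·ℓ(γ) + K·C. -/
theorem dist_le_admSeq_length {X T : Type*} [MetricSpace X] [MetricSpace T] (S : Set X)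
    (f : S → T) (K C : ℝ) (hK : 1 ≤ K) (hC : 0 ≤ C) (hf : IsPseudoIsometry f K C)
    (x y : X) (γ : AdmSeq S f x y) :
    dist x y ≤ K ^ 2 * γ.length + K * C := by
  classical
  have hK0 : (0:ℝ) < K := lt_of_lt_of_le one_pos hK
  rcases Nat.eq_zero_or_pos γ.k with hk | hk
  · -- k = 0 case: dist x y ≤ length
    have he := γ.hyend
    rw [hk] at he
    have hle : dist x y ≤ γ.length := by
      have h0 : dist x y = dist (γ.xs 0) (γ.ys 1) := by rw [γ.hx0, he]
      unfold AdmSeq.length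
      rw [← h0]
      exact le_add_of_nonneg_right (Finset.sum_nonneg fun i _ =>
        add_nonneg dist_nonneg dist_nonneg)
    have hd0 : (0:ℝ) ≤ dist x y := dist_nonneg
    nlinarith [mul_nonneg hK0.le hC, sq_nonneg (K - 1), sq_nonneg K]
  · have hy1 : γ.ys 1 ∈ S := γ.hyS 1 le_rfl hk
    set F : X → T := fun z => if h : z ∈ S then f ⟨z, h⟩ else f ⟨γ.ys 1, hy1⟩ with hFdef
    have hF : ∀ (z : X) (h : z ∈ S), F z = f ⟨z, h⟩ := fun z h => dif_pos h
    -- key chain estimate in T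
    have main : ∀ j, 1 ≤ j → j ≤ γ.k →
        dist (F (γ.ys 1)) (F (γ.xs j)) + K * dist (γ.xs j) (γ.ys (j + 1)) ≤
          ∑ i ∈ Finset.range j,
            (dist (F (γ.ys (i + 1))) (F (γ.xs (i + 1))) +
              K * dist (γ.xs (i + 1)) (γ.ys (i + 2))) := by
      intro j hj1
      induction j, hj1 using Nat.le_induction with
      | base =>
        intro _
        simp
      | succ j hj ih =>
        intro hjk
        have hjk' : j ≤ γ.k := le_trans (Nat.le_succ j) hjk
        have hxj : γ.xs j ∈ S := γ.hxS j hj hjk'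
        have hyj1 : γ.ys (j + 1) ∈ S := γ.hyS (j + 1) (le_trans hj (Nat.le_succ j)) hjk
        have hstep : dist (F (γ.xs j)) (F (γ.ys (j + 1))) ≤
            K * dist (γ.xs j) (γ.ys (j + 1)) := by
          rw [hF _ hxj, hF _ hyj1]
          have h := (hf.1 ⟨γ.xs j, hxj⟩ ⟨γ.ys (j + 1), hyj1⟩).2
          rw [Subtype.dist_eq] at h
          exact h
        have htri : dist (F (γ.ys 1)) (F (γ.xs (j + 1))) ≤
            dist (F (γ.ys 1)) (F (γ.xs j)) + dist (F (γ.xs j)) (F (γ.ys (j + 1))) +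
              dist (F (γ.ys (j + 1))) (F (γ.xs (j + 1))) := dist_triangle4 _ _ _ _
        rw [Finset.sum_range_succ]
        have hih := ih hjk'
        nlinarith [hih, htri, hstep]
    have mk := main γ.k hk le_rfl
    have hxk : γ.xs γ.k ∈ S := γ.hxS γ.k hk le_rfl
    -- lower pseudo-isometry bound at the ends of the chain
    have h2 : dist (γ.ys 1) (γ.xs γ.k) ≤
        K * dist (F (γ.ys 1)) (F (γ.xs γ.k)) + K * C := by
      have hlow : 1 / K * dist (γ.ys 1) (γ.xs γ.k) - C ≤
          dist (f ⟨γ.ys 1, hy1⟩) (f ⟨γ.xs γ.k, hxk⟩) := by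
        have h := (hf.1 ⟨γ.ys 1, hy1⟩ ⟨γ.xs γ.k, hxk⟩).1
        rw [Subtype.dist_eq] at h
        exact h
      rw [hF _ hy1, hF _ hxk]
      have h4 : 1 / K * dist (γ.ys 1) (γ.xs γ.k) ≤
          dist (f ⟨γ.ys 1, hy1⟩) (f ⟨γ.xs γ.k, hxk⟩) + C := by linarith
      calc dist (γ.ys 1) (γ.xs γ.k) = K * (1 / K * dist (γ.ys 1) (γ.xs γ.k)) := by
            field_simp
        _ ≤ K * (dist (f ⟨γ.ys 1, hy1⟩) (f ⟨γ.xs γ.k, hxk⟩) + C) :=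
            mul_le_mul_of_nonneg_left h4 hK0.le
        _ = K * dist (f ⟨γ.ys 1, hy1⟩) (f ⟨γ.xs γ.k, hxk⟩) + K * C := by ring
    -- triangle inequality in X
    have h1 : dist x y ≤ dist (γ.xs 0) (γ.ys 1) + dist (γ.ys 1) (γ.xs γ.k) +
        dist (γ.xs γ.k) (γ.ys (γ.k + 1)) := by
      rw [show dist x y = dist (γ.xs 0) (γ.ys (γ.k + 1)) from by rw [γ.hx0, γ.hyend]]
      exact dist_triangle4 _ _ _ _
    -- rewrite the length using F
    have hlen : γ.length = dist (γ.xs 0) (γ.ys 1) +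
        ∑ i ∈ Finset.range γ.k,
          (dist (F (γ.ys (i + 1))) (F (γ.xs (i + 1))) +
            dist (γ.xs (i + 1)) (γ.ys (i + 2))) := by
      unfold AdmSeq.length
      congr 1
      rw [← Fin.sum_univ_eq_sum_range (fun i =>
        dist (F (γ.ys (i + 1))) (F (γ.xs (i + 1))) + dist (γ.xs (i + 1)) (γ.ys (i + 2))) γ.k]
      refine Finset.sum_congr rfl fun i _ => ?_
      rw [hF _ (γ.hyS _ (Nat.succ_le_succ (Nat.zero_le _)) i.isLt),
        hF _ (γ.hxS _ (Nat.succ_le_succ (Nat.zero_le _)) i.isLt)]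
    -- split sums
    have hsplit : ∑ i ∈ Finset.range γ.k,
        (dist (F (γ.ys (i + 1))) (F (γ.xs (i + 1))) +
          K * dist (γ.xs (i + 1)) (γ.ys (i + 2))) =
        (∑ i ∈ Finset.range γ.k, dist (F (γ.ys (i + 1))) (F (γ.xs (i + 1)))) +
        K * ∑ i ∈ Finset.range γ.k, dist (γ.xs (i + 1)) (γ.ys (i + 2)) := by
      rw [Finset.sum_add_distrib, Finset.mul_sum]
    have hsplit2 : ∑ i ∈ Finset.range γ.k,
        (dist (F (γ.ys (i + 1))) (F (γ.xs (i + 1))) +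
          dist (γ.xs (i + 1)) (γ.ys (i + 2))) =
        (∑ i ∈ Finset.range γ.k, dist (F (γ.ys (i + 1))) (F (γ.xs (i + 1)))) +
        ∑ i ∈ Finset.range γ.k, dist (γ.xs (i + 1)) (γ.ys (i + 2)) := by
      rw [Finset.sum_add_distrib]
    set St := ∑ i ∈ Finset.range γ.k, dist (F (γ.ys (i + 1))) (F (γ.xs (i + 1))) with hSt
    set Sa := ∑ i ∈ Finset.range γ.k, dist (γ.xs (i + 1)) (γ.ys (i + 2)) with hSa
    have hStn : 0 ≤ St := Finset.sum_nonneg fun i _ => dist_nonneg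
    have hSan : 0 ≤ Sa := Finset.sum_nonneg fun i _ => dist_nonneg
    rw [hsplit] at mk
    rw [hlen, hsplit2]
    have hA0 : (0:ℝ) ≤ dist (γ.xs 0) (γ.ys 1) := dist_nonneg
    have hAk : (0:ℝ) ≤ dist (γ.xs γ.k) (γ.ys (γ.k + 1)) := dist_nonneg
    have hD : (0:ℝ) ≤ dist (F (γ.ys 1)) (F (γ.xs γ.k)) := dist_nonneg
    have hK2K : (0:ℝ) ≤ K ^ 2 - K := by nlinarith
    have hK21 : (0:ℝ) ≤ K ^ 2 - 1 := by nlinarith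
    nlinarith [mk, h1, h2, mul_nonneg hK2K hStn, mul_nonneg hK21 hA0,
      mul_nonneg hK21 hAk, hD, hSan, hK0]
end

section
/- Define p(x,y) for x, y ∈ X as the infimum of lengths of admissible sequences from x to y, where f : S → T is a pseudo-isometry with constants K, C. Then for all x, y ∈ X: (1/K²)·d_X(x,y) − C/K ≤ p(x,y) ≤ d_X(x,y). In particular, the quotient map from X to the surgered space is a pseudo-isometry with constants K² and 7C/K (coarse surjectivity holding with constant C). -/
/-- The pseudo-metric `p(x,y)`: the infimum of lengths of admissible sequences from `x` to `y`. -/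
noncomputable def surgP {X T : Type*} [MetricSpace X] [MetricSpace T] (S : Set X) (f : S → T)
    (x y : X) : ℝ :=
  sInf {l : ℝ | ∃ γ : AdmSeq S f x y, l = γ.length}

/-! An admissible sequence alternates jumps `xᵢ → yᵢ₊₁` in `X` with jumps `f yᵢ → f xᵢ` in `T`.
Mapping the middle stretch `y₁, x₁, y₂, …, x_k` into `T` costs at most a factor `K` on each
`X`-jump, so `d_T(f y₁, f x_k) ≤ K·ℓ(γ)`; the lower pseudo-isometry bound pulls this back to
`d_X(y₁, x_k) ≤ K² ℓ(γ) + K C`, and the triangle inequality through `y₁` and `x_k` bounds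
`d_X(x, y)`. The sequence with no jumps into `T` has length `d_X(x, y)`. -/

open Finset

theorem dist_le_sum_dist_zigzag {T : Type*} [PseudoMetricSpace T] (a b : ℕ → T) (n : ℕ) :
    dist (a 0) (b n) ≤
      ∑ i ∈ range (n + 1), dist (a i) (b i) + ∑ i ∈ range n, dist (b i) (a (i + 1)) := by
  induction n with
  | zero => simp
  | succ n ih =>
    rw [sum_range_succ, sum_range_succ (fun i => dist (b i) (a (i + 1)))]
    linarith [dist_triangle4 (a 0) (b n) (a (n + 1)) (b (n + 1))]

theorem dist_le_mul_sum_zigzag {X T : Type*} [PseudoMetricSpace X] [PseudoMetricSpace T]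
    {S : Set X} {g : X → T} {K C : ℝ} (hK : 0 < K)
    (hlower : ∀ z ∈ S, ∀ w ∈ S, 1 / K * dist z w - C ≤ dist (g z) (g w))
    (hupper : ∀ z ∈ S, ∀ w ∈ S, dist (g z) (g w) ≤ K * dist z w)
    (u v : ℕ → X) (m : ℕ) (hu : ∀ i ≤ m, u i ∈ S) (hv : ∀ i ≤ m, v i ∈ S) :
    dist (u 0) (v m) ≤ K * (∑ i ∈ range (m + 1), dist (g (u i)) (g (v i)) +
      K * ∑ i ∈ range m, dist (v i) (u (i + 1)) + C) := by
  have hjumps : ∑ i ∈ range m, dist (g (v i)) (g (u (i + 1))) ≤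
      K * ∑ i ∈ range m, dist (v i) (u (i + 1)) := by
    rw [mul_sum]
    refine sum_le_sum fun i hi => ?_
    have hi := mem_range.mp hi
    exact hupper _ (hv i hi.le) _ (hu (i + 1) hi)
  have hzigzag := dist_le_sum_dist_zigzag (g ∘ u) (g ∘ v) m
  have hends := hlower _ (hu 0 (Nat.zero_le m)) _ (hv m le_rfl)
  simp only [Function.comp_apply] at hzigzag
  calc dist (u 0) (v m) = K * (1 / K * dist (u 0) (v m)) := by field_simp
    _ ≤ _ := by gcongr; linarith

namespace AdmSeq

variable {X T : Type*} [MetricSpace X] [MetricSpace T] {S : Set X} {f : S → T} {x y : X}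

def direct (S : Set X) (f : S → T) (x y : X) : AdmSeq S f x y where
  k := 0
  xs _ := x
  ys _ := y
  hx0 := rfl
  hyend := rfl
  hxS _ h₁ h₀ := absurd (h₁.trans h₀) (by omega)
  hyS _ h₁ h₀ := absurd (h₁.trans h₀) (by omega)

theorem length_direct : (direct S f x y).length = dist x y := by
  simp only [length, direct]
  exact add_eq_left.mpr (Fin.sum_univ_zero _)

theorem length_eq_sum_range (γ : AdmSeq S f x y) {g : X → T} (hg : ∀ s : S, g s = f s) :
    γ.length = dist x (γ.ys 1) + ∑ i ∈ range γ.k,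
      (dist (g (γ.ys (i + 1))) (g (γ.xs (i + 1))) + dist (γ.xs (i + 1)) (γ.ys (i + 2))) := by
  rw [length, γ.hx0, ← Fin.sum_univ_eq_sum_range]
  simp only [← hg]

theorem dist_le_sq_mul_length_add (γ : AdmSeq S f x y) {K C : ℝ} (hK : 1 ≤ K) (hC : 0 ≤ C)
    (hlower : ∀ s₀ s₁ : S, 1 / K * dist s₀ s₁ - C ≤ dist (f s₀) (f s₁))
    (hupper : ∀ s₀ s₁ : S, dist (f s₀) (f s₁) ≤ K * dist s₀ s₁) :
    dist x y ≤ K ^ 2 * γ.length + K * C := by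
  obtain ⟨k, xs, ys, rfl, rfl, hxS, hyS⟩ := γ
  have hK0 : 0 < K := one_pos.trans_le hK
  have hK2 : K ≤ K ^ 2 := by nlinarith
  cases k with
  | zero =>
    simp only [length, Fin.sum_univ_zero, add_zero, zero_add]
    nlinarith [dist_nonneg (x := xs 0) (y := ys 1), mul_nonneg hK0.le hC]
  | succ m =>
    -- extending `f` to `X` makes the `T`-points `f yᵢ`, `f xᵢ` functions of the index `i`
    set g := Function.extend Subtype.val f (fun _ => f ⟨xs 1, hxS 1 le_rfl (by omega)⟩)
    have hg : ∀ s : S, g s = f s := Subtype.val_injective.extend_apply f _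
    have hg' : ∀ z (hz : z ∈ S), g z = f ⟨z, hz⟩ := fun z hz => hg ⟨z, hz⟩
    have hmid := dist_le_mul_sum_zigzag (g := g) (C := C) hK0
      (fun z hz w hw => by rw [hg' z hz, hg' w hw]; exact hlower ⟨z, hz⟩ ⟨w, hw⟩)
      (fun z hz w hw => by rw [hg' z hz, hg' w hw]; exact hupper ⟨z, hz⟩ ⟨w, hw⟩)
      (fun i => ys (i + 1)) (fun i => xs (i + 1)) m
      (fun i hi => hyS _ (by omega) (by omega)) (fun i hi => hxS _ (by omega) (by omega))
    have htri := dist_triangle4 (xs 0) (ys 1) (xs (m + 1)) (ys (m + 2))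
    rw [length_eq_sum_range _ hg, sum_add_distrib,
      sum_range_succ (fun i => dist (xs (i + 1)) (ys (i + 2)))]
    have hfirst := dist_nonneg (x := xs 0) (y := ys 1)
    have hlast := dist_nonneg (x := xs (m + 1)) (y := ys (m + 2))
    have hjumpsT := sum_nonneg fun i (_ : i ∈ range (m + 1)) =>
      dist_nonneg (x := g (ys (i + 1))) (y := g (xs (i + 1)))
    nlinarith

end AdmSeq

/-- If f is a pseudo-isometry with constants K, C then for all x, y ∈ X:
(1/K²)·d_X(x,y) − C/K ≤ p(x,y) ≤ d_X(x,y). -/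
theorem surgP_bounds {X T : Type*} [MetricSpace X] [MetricSpace T] (S : Set X) (f : S → T)
    (K C : ℝ) (hK : 1 ≤ K) (hC : 0 ≤ C) (hf : IsPseudoIsometry f K C) (x y : X) :
    (1 / K ^ 2) * dist x y - C / K ≤ surgP S f x y ∧ surgP S f x y ≤ dist x y := by
  have hK0 : 0 < K := one_pos.trans_le hK
  have hlower : ∀ l ∈ {l : ℝ | ∃ γ : AdmSeq S f x y, l = γ.length},
      (1 / K ^ 2) * dist x y - C / K ≤ l := by
    rintro _ ⟨γ, rfl⟩
    have hdist := γ.dist_le_sq_mul_length_add hK hC (fun s₀ s₁ => (hf.1 s₀ s₁).1)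
      (fun s₀ s₁ => (hf.1 s₀ s₁).2)
    calc 1 / K ^ 2 * dist x y - C / K
        ≤ 1 / K ^ 2 * (K ^ 2 * γ.length + K * C) - C / K := by gcongr
      _ = γ.length := by field_simp; ring
  have hdirect : dist x y ∈ {l : ℝ | ∃ γ : AdmSeq S f x y, l = γ.length} :=
    ⟨AdmSeq.direct S f x y, AdmSeq.length_direct.symm⟩
  exact ⟨le_csInf ⟨_, hdirect⟩ hlower, csInf_le ⟨_, hlower⟩ hdirect⟩
end

section
/- Let a_i = 1 + i − (1/2)^i and b_i = 2 + i − (1/2)^i for i ≥ 0, S = ⋃_{i≥0} [a_i, b_i] ⊆ [0,∞), T = {a_i : i ≥ 0}, and f : S → T the map sending [a_i, b_i] to a_i. Then f is not a pseudo-isometry for any constants K ≥ 1, C ≥ 0: for all K, C there exist points s₀, s₁ ∈ S with d_T(f(s₀), f(s₁)) > K·d_S(s₀, s₁). -/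
/-- `f` is a quasi-isometry with constants `K`, `C`. -/
def IsQuasiIsometry {S T : Type*} [MetricSpace S] [MetricSpace T] (f : S → T) (K C : ℝ) : Prop :=
  (∀ x₀ x₁ : S, (1 / K) * dist x₀ x₁ - C ≤ dist (f x₀) (f x₁) ∧
      dist (f x₀) (f x₁) ≤ K * dist x₀ x₁ + C) ∧
  ∀ y : T, ∃ x : S, dist (f x) y ≤ C

noncomputable def a13 (i : ℕ) : ℝ := 1 + i - (1 / 2) ^ i

noncomputable def b13 (i : ℕ) : ℝ := 2 + i - (1 / 2) ^ i

noncomputable def S13 : Set ℝ := ⋃ i : ℕ, Set.Icc (a13 i) (b13 i)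

noncomputable def T13 : Set ℝ := Set.range a13

/-- The map sending each point of [aᵢ, bᵢ] to aᵢ is not a pseudo-isometry for any K, C:
for all K ≥ 1, C ≥ 0 there are points s₀, s₁ ∈ S with d(f(s₀), f(s₁)) > K·d(s₀, s₁). -/
theorem f13_not_pseudoIsometry (f : S13 → T13)
    (hf : ∀ (i : ℕ) (s : S13), (s : ℝ) ∈ Set.Icc (a13 i) (b13 i) → (f s : ℝ) = a13 i) :
    ∀ K C : ℝ, 1 ≤ K → 0 ≤ C → ∃ s₀ s₁ : S13, K * dist s₀ s₁ < dist (f s₀) (f s₁) := by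
  intro K C hK _
  have hKpos : (0:ℝ) < K := lt_of_lt_of_le one_pos hK
  obtain ⟨n, hn⟩ := exists_pow_lt_of_lt_one (show (0:ℝ) < 1/K by positivity)
    (show (1:ℝ)/2 < 1 by norm_num)
  have hs₀ : b13 n ∈ S13 := Set.mem_iUnion.2 ⟨n, by
    constructor <;> simp [a13, b13]⟩
  have hs₁ : a13 (n+1) ∈ S13 := Set.mem_iUnion.2 ⟨n+1, by
    constructor <;> simp [a13, b13]⟩
  refine ⟨⟨b13 n, hs₀⟩, ⟨a13 (n+1), hs₁⟩, ?_⟩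
  have hf₀ : (f ⟨b13 n, hs₀⟩ : ℝ) = a13 n := hf n _ (by constructor <;> simp [a13, b13])
  have hf₁ : (f ⟨a13 (n+1), hs₁⟩ : ℝ) = a13 (n+1) := hf (n+1) _
    (by constructor <;> simp [a13, b13])
  have hd : dist (⟨b13 n, hs₀⟩ : S13) (⟨a13 (n+1), hs₁⟩ : S13) = (1/2)^(n+1) := by
    rw [Subtype.dist_eq, Real.dist_eq]
    simp only [a13, b13]
    push_cast
    rw [abs_of_nonpos] <;> ring_nf
    · nlinarith [pow_pos (show (0:ℝ) < 1/2 by norm_num) n]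
  have hd' : dist (f ⟨b13 n, hs₀⟩) (f ⟨a13 (n+1), hs₁⟩) = 1 + (1/2)^(n+1) := by
    rw [Subtype.dist_eq, Real.dist_eq, hf₀, hf₁]
    simp only [a13]
    push_cast
    rw [abs_of_nonpos] <;> ring_nf
    · nlinarith [pow_pos (show (0:ℝ) < 1/2 by norm_num) n]
  rw [hd, hd']
  have h2 : K * (1/2)^(n+1) ≤ K * (1/2)^n := by
    apply mul_le_mul_of_nonneg_left _ hKpos.le
    exact pow_le_pow_of_le_one (by norm_num) (by norm_num) (Nat.le_succ n)
  have h3 : K * (1/2)^n < 1 := by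
    rw [← lt_div_iff₀' hKpos]; exact hn
  nlinarith [pow_pos (show (0:ℝ) < 1/2 by norm_num) (n+1)]
end
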